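/- For every integer m, every integer r ≥ 1, and every nonnegative integer k: ∑_{j=0}^{k} ∑_{s=0}^{j} C(k,j)·C(j,s)·(T_{r−1}+T_r)^{j−s}·T_{r+1}^s / T_r^j · T_{m−(r+2)k+j+s} = T_m / T_r^k. -/

import Mathlib

/-!
Let polynomials act on sequences `ℤ → ℚ` with `X` acting as the shift. The addition formula
`T_r T_a + (T_{r-1} + T_r) T_{a+1} + T_{r+1} T_{a+2} = T_{a+r+2}` (true for all `r`, since both
sides satisfy the Tribonacci recurrence in `r` and agree at `r = 0, 1, 2`) says that
`q = T_r + (T_{r-1} + T_r) X + T_{r+1} X²` acts on `T` as the shift by `r + 2`. Hence `q ^ k` acts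
as the shift by `k (r + 2)`; expanding `q ^ k` with the binomial theorem twice and dividing by
`T_r ^ k ≠ 0` gives the identity.
-/

/-- Tribonacci numbers on the naturals. -/
def tribN : ℕ → ℤ
  | 0 => 0
  | 1 => 1
  | 2 => 1
  | n + 3 => tribN (n + 2) + tribN (n + 1) + tribN n

/-- Tribonacci at negative indices: `tribNeg n = T (-n)`, via `T (-n) = 2·T (3-n) - T (4-n)`. -/
def tribNeg : ℕ → ℤ
  | 0 => tribN 0
  | 1 => 2 * tribN 2 - tribN 3
  | 2 => 2 * tribN 1 - tribN 2
  | 3 => 2 * tribN 0 - tribN 1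
  | 4 => 2 * tribNeg 1 - tribN 0
  | n + 5 => 2 * tribNeg (n + 2) - tribNeg (n + 1)

/-- Tribonacci sequence extended to all integers. -/
def T (m : ℤ) : ℤ := if 0 ≤ m then tribN m.toNat else tribNeg (-m).toNat

lemma tribNeg_eq_add (n : ℕ) : tribNeg n = tribNeg (n + 1) + tribNeg (n + 2) + tribNeg (n + 3) := by
  induction n using Nat.strong_induction_on with
  | _ n ih =>
    match n with
    | 0 | 1 | 2 => decide
    | n + 3 =>
      have h6 : tribNeg (n + 6) = 2 * tribNeg (n + 3) - tribNeg (n + 2) := rfl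
      have := ih (n + 2) (by omega)
      simp only [add_assoc, Nat.reduceAdd] at this ⊢
      linarith

theorem eq_of_tribonacci_rec {M : Type*} [AddCommGroup M] {f g : ℤ → M}
    (hf : ∀ n, f (n + 3) = f (n + 2) + f (n + 1) + f n)
    (hg : ∀ n, g (n + 3) = g (n + 2) + g (n + 1) + g n)
    (h0 : f 0 = g 0) (h1 : f 1 = g 1) (h2 : f 2 = g 2) : f = g := by
  suffices h : ∀ n, f n = g n ∧ f (n + 1) = g (n + 1) ∧ f (n + 2) = g (n + 2) from
    funext fun n => (h n).1
  intro n
  induction n using Int.induction_on with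
  | zero => simpa using ⟨h0, h1, h2⟩
  | succ n ih =>
    obtain ⟨h, e1, e2⟩ := ih
    refine ⟨e1, by rwa [add_assoc], ?_⟩
    rw [add_assoc, show (1 : ℤ) + 2 = 3 by norm_num, hf, hg, e1, e2, h]
  | pred n ih =>
    obtain ⟨e0, e1, e2⟩ := ih
    have hf' := hf (-n - 1)
    have hg' := hg (-n - 1)
    simp only [show -(n : ℤ) - 1 + 3 = -n + 2 by ring, show -(n : ℤ) - 1 + 2 = -n + 1 by ring,
      show -(n : ℤ) - 1 + 1 = -n by ring] at hf' hg' ⊢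
    refine ⟨?_, e0, e1⟩
    rw [e2, e1, e0, hg'] at hf'
    exact (add_left_cancel hf').symm

lemma T_natCast (n : ℕ) : T n = tribN n := by
  simp [T]

lemma T_neg_natCast (n : ℕ) : T (-n) = tribNeg n := by
  rcases n with _ | n
  · rfl
  · rw [T, if_neg (by omega), neg_neg, Int.toNat_natCast]

lemma T_add_three (n : ℤ) : T (n + 3) = T (n + 2) + T (n + 1) + T n := by
  rcases le_or_gt 0 n with hn | hn
  · lift n to ℕ using hn
    exact_mod_cast T_natCast (n + 3)
  · rcases lt_or_ge n (-3) with hn3 | hn3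
    · obtain ⟨k, rfl⟩ : ∃ k : ℕ, n = -(k + 4 : ℕ) := ⟨(-n).toNat - 4, by omega⟩
      have e3 : -((k + 4 : ℕ) : ℤ) + 3 = -(k + 1 : ℕ) := by push_cast; ring
      have e2 : -((k + 4 : ℕ) : ℤ) + 2 = -(k + 2 : ℕ) := by push_cast; ring
      have e1 : -((k + 4 : ℕ) : ℤ) + 1 = -(k + 3 : ℕ) := by push_cast; ring
      simp only [e3, e2, e1, T_neg_natCast]
      exact tribNeg_eq_add (k + 1)
    · interval_cases n <;> decide

lemma tribN_succ_pos (n : ℕ) : 0 < tribN (n + 1) := by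
  induction n using Nat.strong_induction_on with
  | _ n ih =>
    match n with
    | 0 | 1 => decide
    | n + 2 =>
      have h2 := ih (n + 1) (by omega)
      have h1 := ih n (by omega)
      have h0 : 0 ≤ tribN n := by
        rcases n with _ | m
        · rfl
        · exact (ih m (by omega)).le
      show 0 < tribN (n + 2) + tribN (n + 1) + tribN n
      linarith

lemma T_pos {r : ℤ} (hr : 0 < r) : 0 < T r := by
  obtain ⟨n, rfl⟩ : ∃ n : ℕ, r = (n + 1 : ℕ) := ⟨r.toNat - 1, by omega⟩
  exact tribN_succ_pos n

lemma T_add (r a : ℤ) :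
    T r * T a + (T (r - 1) + T r) * T (a + 1) + T (r + 1) * T (a + 2) = T (a + r + 2) := by
  suffices h : (fun r => T r * T a + (T (r - 1) + T r) * T (a + 1) + T (r + 1) * T (a + 2)) =
      fun r => T (a + r + 2) from congrFun h r
  have hT := T_add_three
  apply eq_of_tribonacci_rec
  · intro n
    linear_combination (norm := ring_nf)
      T a * hT n + T (a + 1) * (hT (n - 1) + hT n) + T (a + 2) * hT (n + 1)
  · intro n
    linear_combination (norm := ring_nf) hT (a + n + 2)
  · simp [show T (-1) = 0 by decide, show T 1 = 1 by decide, show T 0 = 0 by decide]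
  · norm_num [show T 1 = 1 by decide, show T 0 = 0 by decide, show T 2 = 1 by decide]
    linear_combination (norm := ring_nf) -hT a
  · norm_num [show T 1 = 1 by decide, show T 3 = 2 by decide, show T 2 = 1 by decide]
    linear_combination (norm := ring_nf) -hT a - hT (a + 1)

open Polynomial

section ShiftEval

variable {R : Type*} [CommSemiring R]

/-- `shiftEval f m (∑ aₙ Xⁿ) = ∑ aₙ f (m + n)`: polynomials act on sequences with `X` as the shift. -/
def shiftEval (f : ℤ → R) (m : ℤ) : R[X] →ₗ[R] R :=
  lsum fun n => LinearMap.mulRight R (f (m + n))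

variable (f : ℤ → R) (m : ℤ)

lemma shiftEval_monomial (n : ℕ) (a : R) : shiftEval f m (monomial n a) = a * f (m + n) := by
  simp [shiftEval, sum_monomial_index]

lemma shiftEval_one : shiftEval f m 1 = f m := by
  simpa using shiftEval_monomial f m 0 1

lemma shiftEval_comp_add_right (d : ℤ) (p : R[X]) :
    shiftEval (fun b => f (b + d)) m p = shiftEval f (m + d) p := by
  simp only [shiftEval, lsum_apply, LinearMap.mulRight_apply, add_right_comm]

lemma shiftEval_mul (p q : R[X]) :
    shiftEval f m (p * q) = shiftEval (fun b => shiftEval f b q) m p := by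
  induction p using Polynomial.induction_on' with
  | add p p' hp hp' => rw [add_mul, map_add, map_add, hp, hp']
  | monomial n a =>
    induction q using Polynomial.induction_on' with
    | add q q' hq hq' => simp only [mul_add, map_add, hq, hq', shiftEval_monomial]
    | monomial n' b =>
      simp only [monomial_mul_monomial, shiftEval_monomial]
      push_cast
      ring_nf

lemma shiftEval_pow_of_forall_eq {q : R[X]} {d : ℤ} (hq : ∀ a, shiftEval f a q = f (a + d))
    (k : ℕ) : shiftEval f m (q ^ k) = f (m + k * d) := by
  induction k generalizing m with
  | zero => simp [shiftEval_one]
  | succ k ih =>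
    rw [pow_succ, shiftEval_mul, funext hq, shiftEval_comp_add_right, ih]
    push_cast
    ring_nf

lemma shiftEval_quadratic (w u v : R) :
    shiftEval f m (C w + C u * X + C v * X ^ 2) = w * f m + u * f (m + 1) + v * f (m + 2) := by
  rw [C_mul_X_pow_eq_monomial, C_mul_X_eq_monomial, ← monomial_zero_left]
  simp only [map_add, shiftEval_monomial]
  push_cast
  ring_nf

lemma shiftEval_trinomial_pow (w u v : R) (k : ℕ) :
    shiftEval f m ((C w + C u * X + C v * X ^ 2) ^ k) =
      ∑ j ∈ Finset.range (k + 1), ∑ s ∈ Finset.range (j + 1),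
        k.choose j * j.choose s * w ^ (k - j) * u ^ (j - s) * v ^ s * f (m + j + s) := by
  rw [show C w + C u * X + C v * X ^ 2 = (C v * X ^ 2 + C u * X) + C w by ring, add_pow, map_sum]
  refine Finset.sum_congr rfl fun j _ => ?_
  rw [add_pow, Finset.sum_mul, Finset.sum_mul, map_sum]
  refine Finset.sum_congr rfl fun s hs => ?_
  have hsj : s ≤ j := Nat.lt_succ_iff.mp (Finset.mem_range.mp hs)
  rw [show (C v * X ^ 2) ^ s * (C u * X) ^ (j - s) * (j.choose s : R[X]) * C w ^ (k - j) *
        (k.choose j : R[X]) =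
      C (k.choose j * j.choose s * w ^ (k - j) * u ^ (j - s) * v ^ s) * X ^ (j + s) by
    rw [show j + s = 2 * s + (j - s) by omega]
    simp only [← C_eq_natCast, C_mul, C_pow, pow_add, pow_mul, mul_pow]
    ring]
  rw [C_mul_X_pow_eq_monomial, shiftEval_monomial]
  push_cast
  ring_nf

end ShiftEval

theorem stmt19 : ∀ (m r : ℤ), 1 ≤ r → ∀ k : ℕ,
    ∑ j ∈ Finset.range (k + 1), ∑ s ∈ Finset.range (j + 1),
        (k.choose j : ℚ) * (j.choose s : ℚ) * ((T (r - 1) + T r : ℤ) : ℚ) ^ (j - s) *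
          (T (r + 1) : ℚ) ^ s / (T r : ℚ) ^ j * (T (m - (r + 2) * k + j + s) : ℚ) =
      (T m : ℚ) / (T r : ℚ) ^ k := by
  intro m r hr k
  have hTr : (T r : ℚ) ≠ 0 := by exact_mod_cast (T_pos (by omega)).ne'
  have key := shiftEval_pow_of_forall_eq (fun n => (T n : ℚ)) (m - (r + 2) * k)
    (q := C (T r : ℚ) + C ((T (r - 1) + T r : ℤ) : ℚ) * X + C (T (r + 1) : ℚ) * X ^ 2)
    (d := r + 2) (fun a => by rw [shiftEval_quadratic, ← add_assoc]; exact_mod_cast T_add r a) k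
  rw [shiftEval_trinomial_pow, mul_comm (k : ℤ), sub_add_cancel] at key
  rw [eq_div_iff (pow_ne_zero k hTr), ← key, Finset.sum_mul]
  refine Finset.sum_congr rfl fun j hj => ?_
  rw [Finset.sum_mul]
  refine Finset.sum_congr rfl fun s _ => ?_
  rw [← pow_sub_mul_pow (T r : ℚ) (Nat.lt_succ_iff.mp (Finset.mem_range.mp hj))]
  field_simp
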